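/- arXiv:2508.14671 — 2 statements merged into one kernel-verified Lean document; each statement's English description precedes it below -/
import Mathlib

section
/- Let Γ = (G,I,O,λ) be a labelled open graph with flow-demand matrix M over GF(2). Let A ⊆ V∖I with indicator column vector a (indexed by V∖I), and let S ⊆ V∖O. Then A is focused over S if and only if (M·a)_u = 0 for all u ∈ S. -/
open scoped Classical
noncomputable section

inductive MLabel : Type
  | X | Y | Z | XY | XZ | YZ
  deriving DecidableEq

variable {V : Type*}

/-- The odd neighbourhood of a set `A`: vertices with an odd number of neighbours in `A`. -/
def oddN (G : SimpleGraph V) (A : Set V) : Set V :=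
  {v | Odd ((A ∩ G.neighborSet v).ncard)}

/-- The closed odd neighbourhood of a set `A`. -/
def cOddN (G : SimpleGraph V) (A : Set V) : Set V :=
  symmDiff (oddN G A) A

/-- A Pauli flow on the labelled open graph `(G, I, O, lab)`. -/
structure IsPauliFlow (G : SimpleGraph V) (I O : Set V) (lab : V → MLabel)
    (c : V → Set V) (prec : V → V → Prop) : Prop where
  corr_sub : ∀ u, u ∉ O → c u ⊆ Iᶜ
  irrefl : ∀ u, ¬ prec u u
  trans : ∀ ⦃a b d⦄, prec a b → prec b d → prec a d
  p1 : ∀ u, u ∉ O → ∀ v ∈ c u, v ∉ O → u ≠ v →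
    lab v ∉ ({MLabel.X, MLabel.Y} : Set MLabel) → prec u v
  p2 : ∀ u, u ∉ O → ∀ v ∈ oddN G (c u), v ∉ O → u ≠ v →
    lab v ∉ ({MLabel.Y, MLabel.Z} : Set MLabel) → prec u v
  p3 : ∀ u, u ∉ O → ∀ v, v ∉ O → ¬ prec u v → u ≠ v → lab v = MLabel.Y →
    v ∉ cOddN G (c u)
  p4 : ∀ u, u ∉ O → lab u = MLabel.XY → u ∉ c u ∧ u ∈ oddN G (c u)
  p5 : ∀ u, u ∉ O → lab u = MLabel.XZ → u ∈ c u ∧ u ∈ oddN G (c u)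
  p6 : ∀ u, u ∉ O → lab u = MLabel.YZ → u ∈ c u ∧ u ∉ oddN G (c u)
  p7 : ∀ u, u ∉ O → lab u = MLabel.X → u ∈ oddN G (c u)
  p8 : ∀ u, u ∉ O → lab u = MLabel.Z → u ∈ c u
  p9 : ∀ u, u ∉ O → lab u = MLabel.Y → u ∈ cOddN G (c u)

/-- `A` is focused over `S`. -/
def FocusedOver (G : SimpleGraph V) (lab : V → MLabel) (A S : Set V) : Prop :=
  (∀ w ∈ S ∩ A, lab w ∈ ({MLabel.XY, MLabel.X, MLabel.Y} : Set MLabel)) ∧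
  (∀ w ∈ S ∩ oddN G A, lab w ∈ ({MLabel.XZ, MLabel.YZ, MLabel.Y, MLabel.Z} : Set MLabel)) ∧
  (∀ w ∈ S, lab w = MLabel.Y → w ∉ cOddN G A)

/-- A focused Pauli flow. -/
def IsFocusedPauliFlow (G : SimpleGraph V) (I O : Set V) (lab : V → MLabel)
    (c : V → Set V) (prec : V → V → Prop) : Prop :=
  IsPauliFlow G I O lab c prec ∧ ∀ v, v ∉ O → FocusedOver G lab (c v) (Oᶜ \ {v})

def HasPauliFlow (G : SimpleGraph V) (I O : Set V) (lab : V → MLabel) : Prop :=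
  ∃ c prec, IsPauliFlow G I O lab c prec

/-- The graph that results from inserting a fresh vertex (`none`) with
neighbourhood `S` into `G`. -/
def insertGraph (G : SimpleGraph V) (S : Set V) : SimpleGraph (Option V) where
  Adj a b := match a, b with
    | some x, some y => G.Adj x y
    | some x, none => x ∈ S
    | none, some y => y ∈ S
    | none, none => False
  symm := by
    constructor
    rintro (_ | x) (_ | y) h
    · exact h
    · exact h
    · exact h
    · exact G.adj_symm h
  loopless := by
    constructor
    rintro (_ | x) h
    · exact h
    · exact G.irrefl h

/-- The measurement labelling after inserting a fresh vertex measured `ℓ`. -/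
def insertLab (lab : V → MLabel) (ℓ : MLabel) : Option V → MLabel
  | none => ℓ
  | some v => lab v

/-- The set 𝒳 of X-like internal vertices. -/
def mX (I O : Set V) (lab : V → MLabel) : Set V :=
  {v | v ∉ I ∧ v ∉ O ∧ lab v ∈ ({MLabel.XY, MLabel.X, MLabel.Y} : Set MLabel)}

/-- The set ℒ of planar-measured internal vertices. -/
def mL (I O : Set V) (lab : V → MLabel) : Set V :=
  {v | v ∉ I ∧ v ∉ O ∧ lab v ∈ ({MLabel.XY, MLabel.XZ, MLabel.YZ} : Set MLabel)}


/-- The extended adjacency matrix of `(G, I, O, lab)` over GF(2): adjacency plus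
self-loops on vertices measured `Y` or `XZ`.  (Indexed by all of `V`; the rows
corresponding to outputs and columns corresponding to inputs are never used.) -/
def extAdjM (G : SimpleGraph V) (lab : V → MLabel) : Matrix V V (ZMod 2) :=
  Matrix.of fun v w =>
    if G.Adj v w ∨ (v = w ∧ (lab v = MLabel.Y ∨ lab v = MLabel.XZ)) then 1 else 0

/-- The flow-demand matrix of `(G, I, O, lab)` over GF(2). -/
def flowDemand (G : SimpleGraph V) (lab : V → MLabel) : Matrix V V (ZMod 2) :=
  Matrix.of fun v w =>
    if lab v = MLabel.X ∨ lab v = MLabel.Y ∨ lab v = MLabel.XY then extAdjM G lab v w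
    else if v = w then 1 else 0

lemma natCast_zmod2_eq (n : ℕ) : (n : ZMod 2) = if Odd n then 1 else 0 := by
  rw [← ZMod.natCast_mod]
  rcases Nat.even_or_odd n with he | ho
  · simp [Nat.not_odd_iff_even.2 he, Nat.even_iff.1 he]
  · simp [ho, Nat.odd_iff.1 ho]

lemma sum_indicator_adj {V : Type*} [Fintype V] (G : SimpleGraph V) (A : Set V) (u : V) :
    ∑ w, (if G.Adj u w then (1 : ZMod 2) else 0) * (if w ∈ A then 1 else 0)
      = if u ∈ oddN G A then 1 else 0 := by
  have h1 : ∀ w, (if G.Adj u w then (1 : ZMod 2) else 0) * (if w ∈ A then 1 else 0)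
      = if w ∈ A ∩ G.neighborSet u then 1 else 0 := by
    intro w
    by_cases h : G.Adj u w <;> by_cases h2 : w ∈ A <;>
      simp [h, h2, SimpleGraph.mem_neighborSet, G.adj_comm u w]
  rw [Finset.sum_congr rfl fun w _ => h1 w, Finset.sum_boole]
  have hc : (A ∩ G.neighborSet u).ncard
      = (Finset.univ.filter (fun w => w ∈ A ∩ G.neighborSet u)).card := by
    rw [Set.ncard_eq_toFinset_card']
    congr 1
    ext w; simp
  rw [oddN, Set.mem_setOf_eq, hc, natCast_zmod2_eq]
  congr 1

lemma sum_indicator_eq {V : Type*} [Fintype V] (A : Set V) (u : V) :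
    ∑ w, (if u = w then (1 : ZMod 2) else 0) * (if w ∈ A then 1 else 0)
      = if u ∈ A then 1 else 0 := by
  rw [Finset.sum_eq_single u]
  · simp
  · intro w _ hw
    simp [Ne.symm hw]
  · simp

/-- `A ⊆ V∖I` is focused over `S ⊆ V∖O` iff the product of the
flow-demand matrix with the indicator vector of `A` vanishes on `S`. -/
theorem focused_iff_flowDemand_mulVec_eq_zero {V : Type*} [Fintype V]
    (G : SimpleGraph V) (I O : Set V) (lab : V → MLabel)
    (A : Set V) (hA : A ⊆ Iᶜ) (S : Set V) (hS : S ⊆ Oᶜ) :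
    FocusedOver G lab A S ↔
      ∀ u ∈ S, (flowDemand G lab).mulVec (fun w => if w ∈ A then 1 else 0) u = 0 := by
  have main : ∀ u, ((u ∈ A → lab u ∈ ({MLabel.XY, MLabel.X, MLabel.Y} : Set MLabel)) ∧
      (u ∈ oddN G A → lab u ∈ ({MLabel.XZ, MLabel.YZ, MLabel.Y, MLabel.Z} : Set MLabel)) ∧
      (lab u = MLabel.Y → u ∉ cOddN G A)) ↔
      (flowDemand G lab).mulVec (fun w => if w ∈ A then 1 else 0) u = 0 := by
    intro u
    have hmv : (flowDemand G lab).mulVec (fun w => if w ∈ A then 1 else 0) u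
        = ∑ w, flowDemand G lab u w * (if w ∈ A then 1 else 0) := rfl
    cases hl : lab u with
    | X =>
      have : (flowDemand G lab).mulVec (fun w => if w ∈ A then 1 else 0) u
          = if u ∈ oddN G A then 1 else 0 := by
        rw [hmv, ← sum_indicator_adj G A u]
        refine Finset.sum_congr rfl fun w _ => ?_
        simp [flowDemand, extAdjM, hl]
      rw [this]
      by_cases ho : u ∈ oddN G A <;> simp [ho, hl]
    | XY =>
      have : (flowDemand G lab).mulVec (fun w => if w ∈ A then 1 else 0) u
          = if u ∈ oddN G A then 1 else 0 := by
        rw [hmv, ← sum_indicator_adj G A u]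
        refine Finset.sum_congr rfl fun w _ => ?_
        simp [flowDemand, extAdjM, hl]
      rw [this]
      by_cases ho : u ∈ oddN G A <;> simp [ho, hl]
    | Y =>
      have : (flowDemand G lab).mulVec (fun w => if w ∈ A then 1 else 0) u
          = (if u ∈ oddN G A then 1 else 0) + (if u ∈ A then 1 else 0) := by
        rw [hmv, ← sum_indicator_adj G A u, ← sum_indicator_eq A u, ← Finset.sum_add_distrib]
        refine Finset.sum_congr rfl fun w _ => ?_
        rw [← add_mul]
        congr 1
        by_cases h2 : u = w
        · subst h2
          simp [flowDemand, extAdjM, hl, G.loopless.irrefl u]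
        · by_cases h1 : G.Adj u w <;> simp [flowDemand, extAdjM, hl, h1, h2]
      rw [this]
      have hcm : u ∈ cOddN G A ↔ (u ∈ oddN G A ∧ u ∉ A) ∨ (u ∈ A ∧ u ∉ oddN G A) :=
        Set.mem_symmDiff
      by_cases ho : u ∈ oddN G A <;> by_cases ha : u ∈ A <;>
        simp [ho, ha, hl, hcm] <;> decide
    | Z =>
      have : (flowDemand G lab).mulVec (fun w => if w ∈ A then 1 else 0) u
          = if u ∈ A then 1 else 0 := by
        rw [hmv, ← sum_indicator_eq A u]
        refine Finset.sum_congr rfl fun w _ => ?_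
        simp [flowDemand, hl]
      rw [this]
      by_cases ha : u ∈ A <;> simp [ha, hl]
    | XZ =>
      have : (flowDemand G lab).mulVec (fun w => if w ∈ A then 1 else 0) u
          = if u ∈ A then 1 else 0 := by
        rw [hmv, ← sum_indicator_eq A u]
        refine Finset.sum_congr rfl fun w _ => ?_
        simp [flowDemand, hl]
      rw [this]
      by_cases ha : u ∈ A <;> simp [ha, hl]
    | YZ =>
      have : (flowDemand G lab).mulVec (fun w => if w ∈ A then 1 else 0) u
          = if u ∈ A then 1 else 0 := by
        rw [hmv, ← sum_indicator_eq A u]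
        refine Finset.sum_congr rfl fun w _ => ?_
        simp [flowDemand, hl]
      rw [this]
      by_cases ha : u ∈ A <;> simp [ha, hl]
  constructor
  · rintro ⟨h1, h2, h3⟩ u hu
    exact (main u).1 ⟨fun ha => h1 u ⟨hu, ha⟩, fun ho => h2 u ⟨hu, ho⟩, h3 u hu⟩
  · intro h
    exact ⟨fun w hw => ((main w).2 (h w hw.1)).1 hw.2,
      fun w hw => ((main w).2 (h w hw.1)).2.1 hw.2,
      fun w hw => ((main w).2 (h w hw)).2.2⟩

end
end

section
/- Let (G,I,O,λ) be a labelled open graph with Pauli flow (c,≺), and let u,v ∈ V∖(I∪O) with {u,v} ∈ E. Define λ' by: λ'(w)=Z if w∈{u,v} and λ(w)=X; λ'(w)=X if w∈{u,v} and λ(w)=Z; λ'(w)=YZ if w∈{u,v} and λ(w)=XY; λ'(w)=XY if w∈{u,v} and λ(w)=YZ; λ'(w)=λ(w) otherwise. Define c' by: c'(w)=c(w) if u,v ∉ cOdd_G(c(w)); c'(w)=c(w) Δ {u} if u ∈ cOdd_G(c(w)) and v ∉ cOdd_G(c(w)); c'(w)=c(w) Δ {v} if u ∉ cOdd_G(c(w))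 and v ∈ cOdd_G(c(w)); c'(w)=c(w) Δ {u,v} if u,v ∈ cOdd_G(c(w)). Then (G∧uv, I, O, λ') has Pauli flow (c',≺), and for every w ∈ V∖O, cOdd_{G∧uv}(c'(w)) = cOdd_G(c(w)). Moreover, if (c,≺) is focused and λ(u),λ(v) ≠ XZ, then (c',≺) is focused; and if all measurement labels of λ are planar (in {XY,XZ,YZ}), then all measurement labels of λ' are planar. -/
open scoped Classical
noncomputable section

variable {V : Type*}

/-- Local complementation about `u`: toggle all edges between distinct neighbours of `u`. -/
def localComp (G : SimpleGraph V) (u : V) : SimpleGraph V where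
  Adj a b := (G.Adj a b ∧ ¬(G.Adj u a ∧ G.Adj u b)) ∨
             (¬G.Adj a b ∧ a ≠ b ∧ G.Adj u a ∧ G.Adj u b)
  symm := by
    constructor
    rintro a b (⟨hab, hn⟩ | ⟨hn, hne, ha, hb⟩)
    · exact Or.inl ⟨hab.symm, fun h => hn ⟨h.2, h.1⟩⟩
    · exact Or.inr ⟨fun h => hn h.symm, hne.symm, hb, ha⟩
  loopless := by
    constructor
    rintro a (⟨hab, _⟩ | ⟨_, hne, _, _⟩)
    · exact G.irrefl hab
    · exact hne rfl

/-- The pivot about the edge `{u,v}`: `G ∧ uv = G ⋆ u ⋆ v ⋆ u`. -/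
def pivotG (G : SimpleGraph V) (u v : V) : SimpleGraph V :=
  localComp (localComp (localComp G u) v) u

/-- The measurement labelling after pivoting about `{u,v}`: the labels of `u`
and `v` are swapped `X ↔ Z` and `XY ↔ YZ`; all other labels are unchanged. -/
def pivotLab (lab : V → MLabel) (u v : V) : V → MLabel := fun w =>
  if w = u ∨ w = v then
    match lab w with
    | MLabel.X => MLabel.Z
    | MLabel.Z => MLabel.X
    | MLabel.XY => MLabel.YZ
    | MLabel.YZ => MLabel.XY
    | MLabel.Y => MLabel.Y
    | MLabel.XZ => MLabel.XZ
  else lab w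

/-- The correction function after pivoting about `{u,v}`: take the symmetric
difference of `c w` with those of `u`, `v` lying in the closed odd neighbourhood
of `c w`. -/
def pivotCorr (G : SimpleGraph V) (c : V → Set V) (u v : V) : V → Set V := fun w =>
  symmDiff (c w) ((if u ∈ cOddN G (c w) then {u} else ∅) ∪
                  (if v ∈ cOddN G (c w) then {v} else ∅))

set_option linter.unusedSectionVars false
namespace PivotAux
variable {V : Type*} [Fintype V] {G : SimpleGraph V}

lemma odd_ncard_symmDiff (A B : Set V) :
    Odd ((symmDiff A B).ncard) ↔ Xor (Odd A.ncard) (Odd B.ncard) := by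
  have h1 : (A ∪ B).ncard + (A ∩ B).ncard = A.ncard + B.ncard :=
    Set.ncard_union_add_ncard_inter A B
  have hsub : A ∩ B ⊆ A ∪ B := (Set.inter_subset_left).trans Set.subset_union_left
  have h2 : (symmDiff A B).ncard = (A ∪ B).ncard - (A ∩ B).ncard := by
    rw [symmDiff_eq_sup_sdiff_inf]
    exact Set.ncard_diff hsub (Set.toFinite _)
  have hle : (A ∩ B).ncard ≤ (A ∪ B).ncard := Set.ncard_le_ncard hsub (Set.toFinite _)
  rw [Nat.odd_iff, Nat.odd_iff, Nat.odd_iff] at *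
  unfold Xor
  omega

lemma mem_oddN {B : Set V} {x : V} : x ∈ oddN G B ↔ Odd ((B ∩ G.neighborSet x).ncard) :=
  Iff.rfl

lemma mem_oddN_symmDiff (A B : Set V) (x : V) :
    x ∈ oddN G (symmDiff A B) ↔ Xor (x ∈ oddN G A) (x ∈ oddN G B) := by
  have h : symmDiff A B ∩ G.neighborSet x
      = symmDiff (A ∩ G.neighborSet x) (B ∩ G.neighborSet x) := by
    ext a
    simp only [Set.mem_inter_iff, Set.mem_symmDiff]
    tauto
  rw [mem_oddN, h, odd_ncard_symmDiff]
  rfl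

lemma mem_oddN_singleton (u x : V) : x ∈ oddN G {u} ↔ G.Adj x u := by
  rw [mem_oddN]
  by_cases h : G.Adj x u
  · have h0 : ({u} : Set V) ∩ G.neighborSet x = {u} := by
      ext a
      simp only [Set.mem_inter_iff, Set.mem_singleton_iff, SimpleGraph.mem_neighborSet]
      constructor
      · tauto
      · rintro rfl; exact ⟨rfl, h⟩
    rw [h0, Set.ncard_singleton]
    simp [h]
  · have h0 : ({u} : Set V) ∩ G.neighborSet x = ∅ := by
      ext a
      simp only [Set.mem_inter_iff, Set.mem_singleton_iff, SimpleGraph.mem_neighborSet,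
        Set.mem_empty_iff_false, iff_false, not_and]
      rintro rfl
      exact h
    rw [h0]
    simp [h]

lemma mem_oddN_empty (x : V) : x ∈ oddN G (∅ : Set V) ↔ False := by
  rw [mem_oddN]
  simp

lemma localComp_adj (u a b : V) :
    (localComp G u).Adj a b ↔ Xor (G.Adj a b) (a ≠ b ∧ G.Adj u a ∧ G.Adj u b) := by
  unfold localComp Xor
  constructor
  · rintro (⟨h1, h2⟩ | ⟨h1, h2, h3, h4⟩)
    · exact Or.inl ⟨h1, fun ⟨_, h5, h6⟩ => h2 ⟨h5, h6⟩⟩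
    · exact Or.inr ⟨⟨h2, h3, h4⟩, h1⟩
  · rintro (⟨h1, h2⟩ | ⟨⟨h1, h2, h3⟩, h4⟩)
    · exact Or.inl ⟨h1, fun ⟨h5, h6⟩ => h2 ⟨h1.ne, h5, h6⟩⟩
    · exact Or.inr ⟨h4, h1, h2, h3⟩

lemma odd_ncard_diff_singleton (A : Set V) (x : V) :
    Odd ((A \ {x}).ncard) ↔ Xor (Odd A.ncard) (x ∈ A) := by
  by_cases h : x ∈ A
  · have h1 : (A \ {x}).ncard + 1 = A.ncard := Set.ncard_diff_singleton_add_one h (Set.toFinite A)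
    simp only [h, Xor, iff_true, not_true_eq_false, and_false, false_or, and_true, true_and]
    rw [Nat.odd_iff, Nat.odd_iff]
    omega
  · rw [Set.diff_singleton_eq_self h]
    unfold Xor
    tauto

lemma mem_oddN_localComp (u : V) (B : Set V) (x : V) :
    x ∈ oddN (localComp G u) B ↔
      Xor (x ∈ oddN G B) (G.Adj u x ∧ Xor (u ∈ oddN G B) (x ∈ B)) := by
  by_cases h : G.Adj u x
  · have hN : (localComp G u).neighborSet x
        = symmDiff (G.neighborSet x) (G.neighborSet u \ {x}) := by
      ext a
      rw [SimpleGraph.mem_neighborSet, localComp_adj]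
      have f1 : G.Adj x a → ¬ x = a := fun hh he => G.loopless.irrefl x (he ▸ hh)
      have f2 : (a = x) ↔ (x = a) := eq_comm
      simp only [Set.mem_symmDiff, SimpleGraph.mem_neighborSet, Set.mem_diff,
        Set.mem_singleton_iff, Xor, ne_eq, h, true_and]
      tauto
    have key : B ∩ (localComp G u).neighborSet x
        = symmDiff (B ∩ G.neighborSet x) (B ∩ (G.neighborSet u \ {x})) := by
      rw [hN]
      ext a
      simp only [Set.mem_inter_iff, Set.mem_symmDiff]
      tauto
    rw [mem_oddN, key, odd_ncard_symmDiff]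
    have h2 : B ∩ (G.neighborSet u \ {x}) = (B ∩ G.neighborSet u) \ {x} := by
      ext a; simp only [Set.mem_inter_iff, Set.mem_diff]; tauto
    rw [h2, odd_ncard_diff_singleton]
    have h3 : (x ∈ B ∩ G.neighborSet u) ↔ x ∈ B := by
      simp only [Set.mem_inter_iff, SimpleGraph.mem_neighborSet]
      exact ⟨fun ⟨h4, _⟩ => h4, fun h4 => ⟨h4, h⟩⟩
    rw [h3]
    have h4 : (u ∈ oddN G B) ↔ Odd ((B ∩ G.neighborSet u).ncard) := Iff.rfl
    rw [mem_oddN, ← h4]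
    unfold Xor
    tauto
  · have hN : (localComp G u).neighborSet x = G.neighborSet x := by
      ext a
      rw [SimpleGraph.mem_neighborSet, localComp_adj]
      simp only [SimpleGraph.mem_neighborSet, Xor]
      constructor
      · rintro (⟨h1, _⟩ | ⟨⟨_, h2, _⟩, _⟩)
        · exact h1
        · exact (h h2).elim
      · intro h1
        exact Or.inl ⟨h1, fun ⟨_, h2, _⟩ => h h2⟩
    rw [mem_oddN, hN, ← mem_oddN]
    unfold Xor
    tauto


lemma mem_cOddN {B : Set V} {x : V} :
    x ∈ cOddN G B ↔ Xor (x ∈ oddN G B) (x ∈ B) := by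
  unfold cOddN
  rw [Set.mem_symmDiff]
  unfold Xor
  tauto

set_option maxHeartbeats 4000000 in
lemma mem_oddN_pivot (u v : V) (huv : G.Adj u v) (B : Set V) (x : V) :
    x ∈ oddN (pivotG G u v) B ↔
      Xor (x ∈ oddN G B)
        (Xor ((v ∈ cOddN G B) ∧ (G.Adj u x ∨ x = u))
              ((u ∈ cOddN G B) ∧ (G.Adj v x ∨ x = v))) := by
  show x ∈ oddN (localComp (localComp (localComp G u) v) u) B ↔ _
  rw [mem_oddN_localComp u B x,
      mem_oddN_localComp v B x, mem_oddN_localComp v B u,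
      localComp_adj v u x,
      mem_oddN_localComp u B x, mem_oddN_localComp u B u, mem_oddN_localComp u B v,
      localComp_adj u u x, localComp_adj u v u, localComp_adj u v x,
      mem_cOddN, mem_cOddN]
  have huu : ¬ G.Adj u u := G.loopless.irrefl u
  have hvv : ¬ G.Adj v v := G.loopless.irrefl v
  have hvu : G.Adj v u := huv.symm
  have hne : u ≠ v := huv.ne
  have hne' : v ≠ u := huv.ne'
  by_cases hxu : x = u
  · simp only [Xor, ne_eq, hxu, huu, hvu, huv, hne, hne', not_true_eq_false,
      not_false_eq_true]
    by_cases h4 : u ∈ B <;> by_cases h5 : v ∈ B <;>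
      by_cases h7 : u ∈ oddN G B <;> by_cases h8 : v ∈ oddN G B <;>
      simp_all
  · by_cases hxv : x = v
    · simp only [Xor, ne_eq, hxv, huu, hvv, hvu, huv, hne, hne', not_true_eq_false,
        not_false_eq_true]
      by_cases h4 : u ∈ B <;> by_cases h5 : v ∈ B <;>
        by_cases h7 : u ∈ oddN G B <;> by_cases h8 : v ∈ oddN G B <;>
        simp_all
    · have hux : u ≠ x := fun h => hxu h.symm
      have hvx : v ≠ x := fun h => hxv h.symm
      simp only [Xor, ne_eq, huu, hvv, hvu, huv, hne, hne', hxu, hxv, hux, hvx,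
        not_true_eq_false, not_false_eq_true]
      by_cases h1 : G.Adj u x <;> by_cases h2 : G.Adj v x <;>
        by_cases h3 : x ∈ B <;> by_cases h4 : u ∈ B <;> by_cases h5 : v ∈ B <;>
        by_cases h6 : x ∈ oddN G B <;> by_cases h7 : u ∈ oddN G B <;>
        by_cases h8 : v ∈ oddN G B <;>
        simp_all

lemma mem_oddN_pivot_single_u (u v : V) (huv : G.Adj u v) (x : V) :
    x ∈ oddN (pivotG G u v) {u} ↔ Xor (x = u) (Xor (x = v) (G.Adj v x)) := by
  rw [mem_oddN_pivot u v huv {u} x, mem_cOddN, mem_cOddN, mem_oddN_singleton,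
    mem_oddN_singleton, mem_oddN_singleton]
  have huu : ¬ G.Adj u u := G.loopless.irrefl u
  have hvv : ¬ G.Adj v v := G.loopless.irrefl v
  have hvu : G.Adj v u := huv.symm
  have hne : u ≠ v := huv.ne
  have hne' : v ≠ u := huv.ne'
  have h1 : G.Adj x u ↔ G.Adj u x := G.adj_comm x u
  have h2 : G.Adj x v ↔ G.Adj v x := G.adj_comm x v
  have h3 : G.Adj u x → x ≠ u := fun h he => G.loopless.irrefl u (he ▸ h)
  have h4 : G.Adj v x → x ≠ v := fun h he => G.loopless.irrefl v (he ▸ h)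
  simp only [Xor, Set.mem_singleton_iff, huu, hvu, huv, hne, not_true_eq_false,
    not_false_eq_true]
  by_cases e1 : x = u <;> by_cases e2 : x = v <;>
    by_cases a1 : G.Adj u x <;> by_cases a2 : G.Adj v x <;>
    simp_all

lemma mem_oddN_pivot_single_v (u v : V) (huv : G.Adj u v) (x : V) :
    x ∈ oddN (pivotG G u v) {v} ↔ Xor (x = u) (Xor (x = v) (G.Adj u x)) := by
  rw [mem_oddN_pivot u v huv {v} x, mem_cOddN, mem_cOddN, mem_oddN_singleton,
    mem_oddN_singleton, mem_oddN_singleton]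
  have huu : ¬ G.Adj u u := G.loopless.irrefl u
  have hvv : ¬ G.Adj v v := G.loopless.irrefl v
  have hvu : G.Adj v u := huv.symm
  have hne : u ≠ v := huv.ne
  have hne' : v ≠ u := huv.ne'
  have h1 : G.Adj x v ↔ G.Adj v x := G.adj_comm x v
  have h3 : G.Adj u x → x ≠ u := fun h he => G.loopless.irrefl u (he ▸ h)
  have h4 : G.Adj v x → x ≠ v := fun h he => G.loopless.irrefl v (he ▸ h)
  simp only [Xor, Set.mem_singleton_iff, huu, hvv, hvu, huv, hne, hne',
    not_true_eq_false, not_false_eq_true]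
  by_cases e1 : x = u <;> by_cases e2 : x = v <;>
    by_cases a1 : G.Adj u x <;> by_cases a2 : G.Adj v x <;>
    simp_all

set_option maxHeartbeats 2000000 in
lemma mem_oddN_pivot_corr (u v : V) (huv : G.Adj u v) (B : Set V) (x : V) :
    x ∈ oddN (pivotG G u v)
      (symmDiff B ((if u ∈ cOddN G B then ({u} : Set V) else ∅) ∪
                   (if v ∈ cOddN G B then ({v} : Set V) else ∅))) ↔
    Xor (x ∈ oddN G B)
      (x ∈ ((if u ∈ cOddN G B then ({u} : Set V) else ∅) ∪
            (if v ∈ cOddN G B then ({v} : Set V) else ∅))) := by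
  have hne : u ≠ v := huv.ne
  have h3 : G.Adj u x → x ≠ u := fun h he => G.loopless.irrefl u (he ▸ h)
  have h4 : G.Adj v x → x ≠ v := fun h he => G.loopless.irrefl v (he ▸ h)
  by_cases hu : u ∈ cOddN G B <;> by_cases hv : v ∈ cOddN G B
  · have hS : (if u ∈ cOddN G B then ({u} : Set V) else ∅) ∪
        (if v ∈ cOddN G B then ({v} : Set V) else ∅) = symmDiff {u} {v} := by
      simp only [hu, hv, if_pos]
      ext a
      simp only [Set.mem_union, Set.mem_symmDiff, Set.mem_singleton_iff]
      constructor
      · rintro (rfl | rfl)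
        · exact Or.inl ⟨rfl, hne⟩
        · exact Or.inr ⟨rfl, fun h => hne h.symm⟩
      · tauto
    rw [hS, mem_oddN_symmDiff, mem_oddN_symmDiff, mem_oddN_pivot u v huv B x,
      mem_oddN_pivot_single_u u v huv x, mem_oddN_pivot_single_v u v huv x,
      Set.mem_symmDiff]
    simp only [Set.mem_singleton_iff, Xor, hu, hv] at *
    by_cases e1 : x = u <;> by_cases e2 : x = v <;>
      by_cases a1 : G.Adj u x <;> by_cases a2 : G.Adj v x <;>
      by_cases p1 : x ∈ oddN G B <;>
      simp_all
  · have hS : (if u ∈ cOddN G B then ({u} : Set V) else ∅) ∪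
        (if v ∈ cOddN G B then ({v} : Set V) else ∅) = {u} := by
      simp [hu, hv]
    rw [hS, mem_oddN_symmDiff, mem_oddN_pivot u v huv B x,
      mem_oddN_pivot_single_u u v huv x]
    simp only [Set.mem_singleton_iff, Xor, hu, hv] at *
    by_cases e1 : x = u <;> by_cases e2 : x = v <;>
      by_cases a1 : G.Adj u x <;> by_cases a2 : G.Adj v x <;>
      by_cases p1 : x ∈ oddN G B <;>
      simp_all
  · have hS : (if u ∈ cOddN G B then ({u} : Set V) else ∅) ∪
        (if v ∈ cOddN G B then ({v} : Set V) else ∅) = {v} := by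
      simp [hu, hv]
    rw [hS, mem_oddN_symmDiff, mem_oddN_pivot u v huv B x,
      mem_oddN_pivot_single_v u v huv x]
    simp only [Set.mem_singleton_iff, Xor, hu, hv] at *
    by_cases e1 : x = u <;> by_cases e2 : x = v <;>
      by_cases a1 : G.Adj u x <;> by_cases a2 : G.Adj v x <;>
      by_cases p1 : x ∈ oddN G B <;>
      simp_all
  · have hS : (if u ∈ cOddN G B then ({u} : Set V) else ∅) ∪
        (if v ∈ cOddN G B then ({v} : Set V) else ∅) = ∅ := by
      simp [hu, hv]
    have hBE : symmDiff B (∅ : Set V) = B := by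
      rw [← Set.bot_eq_empty, symmDiff_bot]
    rw [hS, hBE, mem_oddN_pivot u v huv B x]
    simp [hu, hv, Xor]

end PivotAux

set_option maxHeartbeats 4000000 in
/-- pivoting about an edge `{u,v}` between internal vertices
preserves Pauli flow (with the adjusted labels and correction sets), preserves
closed odd neighbourhoods of correction sets, preserves focusing when neither
`u` nor `v` is XZ-measured, and maps planar labellings to planar labellings. -/
theorem pivot_pauli_flow {V : Type*} [Fintype V]
    (G : SimpleGraph V) (I O : Set V) (lab : V → MLabel)
    (c : V → Set V) (prec : V → V → Prop)
    (hflow : IsPauliFlow G I O lab c prec)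
    (u v : V) (huI : u ∉ I) (huO : u ∉ O) (hvI : v ∉ I) (hvO : v ∉ O)
    (huv : G.Adj u v) :
    IsPauliFlow (pivotG G u v) I O (pivotLab lab u v) (pivotCorr G c u v) prec ∧
    (∀ w, w ∉ O → cOddN (pivotG G u v) (pivotCorr G c u v w) = cOddN G (c w)) ∧
    (IsFocusedPauliFlow G I O lab c prec → lab u ≠ MLabel.XZ → lab v ≠ MLabel.XZ →
      IsFocusedPauliFlow (pivotG G u v) I O (pivotLab lab u v)
        (pivotCorr G c u v) prec) ∧
    ((∀ w, w ∉ O → lab w ∈ ({MLabel.XY, MLabel.XZ, MLabel.YZ} : Set MLabel)) →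
      ∀ w, w ∉ O →
        pivotLab lab u v w ∈ ({MLabel.XY, MLabel.XZ, MLabel.YZ} : Set MLabel)) := by
  classical
  have hne : u ≠ v := huv.ne
  have hne' : v ≠ u := huv.ne'
  have hS : ∀ (B : Set V) (x : V),
      (x ∈ ((if u ∈ cOddN G B then ({u} : Set V) else ∅) ∪
            (if v ∈ cOddN G B then ({v} : Set V) else ∅))) ↔
        ((x = u ∧ u ∈ cOddN G B) ∨ (x = v ∧ v ∈ cOddN G B)) := by
    intro B x
    by_cases hu : u ∈ cOddN G B <;> by_cases hv : v ∈ cOddN G B <;> simp [hu, hv, or_comm]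
  have hB' : ∀ w x, x ∈ pivotCorr G c u v w ↔
      Xor (x ∈ c w) ((x = u ∧ u ∈ cOddN G (c w)) ∨ (x = v ∧ v ∈ cOddN G (c w))) := by
    intro w x
    simp only [pivotCorr]
    rw [Set.mem_symmDiff, hS (c w) x]
    exact Iff.rfl
  have hOdd' : ∀ w x, x ∈ oddN (pivotG G u v) (pivotCorr G c u v w) ↔
      Xor (x ∈ oddN G (c w))
        ((x = u ∧ u ∈ cOddN G (c w)) ∨ (x = v ∧ v ∈ cOddN G (c w))) := by
    intro w x
    have h := PivotAux.mem_oddN_pivot_corr (G := G) u v huv (c w) x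
    rw [hS (c w) x] at h
    simp only [pivotCorr]
    exact h
  have hcOddAll : ∀ w, cOddN (pivotG G u v) (pivotCorr G c u v w) = cOddN G (c w) := by
    intro w
    ext x
    rw [PivotAux.mem_cOddN, PivotAux.mem_cOddN, hOdd' w x, hB' w x]
    generalize (x = u ∧ u ∈ cOddN G (c w) ∨ x = v ∧ v ∈ cOddN G (c w)) = s
    generalize (x ∈ oddN G (c w)) = p
    generalize (x ∈ c w) = b
    unfold Xor
    tauto
  have hB'u : ∀ w, u ∈ pivotCorr G c u v w ↔ u ∈ oddN G (c w) := by
    intro w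
    rw [hB' w u]
    simp only [hne, eq_self_iff_true, true_and, false_and, or_false]
    rw [PivotAux.mem_cOddN]
    generalize (u ∈ oddN G (c w)) = p
    generalize (u ∈ c w) = b
    unfold Xor
    tauto
  have hB'v : ∀ w, v ∈ pivotCorr G c u v w ↔ v ∈ oddN G (c w) := by
    intro w
    rw [hB' w v]
    simp only [hne', eq_self_iff_true, true_and, false_and, false_or]
    rw [PivotAux.mem_cOddN]
    generalize (v ∈ oddN G (c w)) = p
    generalize (v ∈ c w) = b
    unfold Xor
    tauto
  have hOdd'u : ∀ w, u ∈ oddN (pivotG G u v) (pivotCorr G c u v w) ↔ u ∈ c w := by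
    intro w
    rw [hOdd' w u]
    simp only [hne, eq_self_iff_true, true_and, false_and, or_false]
    rw [PivotAux.mem_cOddN]
    generalize (u ∈ oddN G (c w)) = p
    generalize (u ∈ c w) = b
    unfold Xor
    tauto
  have hOdd'v : ∀ w, v ∈ oddN (pivotG G u v) (pivotCorr G c u v w) ↔ v ∈ c w := by
    intro w
    rw [hOdd' w v]
    simp only [hne', eq_self_iff_true, true_and, false_and, false_or]
    rw [PivotAux.mem_cOddN]
    generalize (v ∈ oddN G (c w)) = p
    generalize (v ∈ c w) = b
    unfold Xor
    tauto
  have hB'x : ∀ w x, ¬ x = u → ¬ x = v → (x ∈ pivotCorr G c u v w ↔ x ∈ c w) := by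
    intro w x h1 h2
    rw [hB' w x]
    simp only [h1, h2, false_and, or_false, false_or]
    generalize (x ∈ c w) = b
    unfold Xor
    tauto
  have hOdd'x : ∀ w x, ¬ x = u → ¬ x = v →
      (x ∈ oddN (pivotG G u v) (pivotCorr G c u v w) ↔ x ∈ oddN G (c w)) := by
    intro w x h1 h2
    rw [hOdd' w x]
    simp only [h1, h2, false_and, or_false, false_or]
    generalize (x ∈ oddN G (c w)) = b
    unfold Xor
    tauto
  have hlab_other : ∀ x, ¬ x = u → ¬ x = v → pivotLab lab u v x = lab x := by
    intro x h1 h2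
    simp [pivotLab, h1, h2]
  have hlabY : ∀ x, pivotLab lab u v x = MLabel.Y ↔ lab x = MLabel.Y := by
    intro x
    by_cases h : x = u ∨ x = v
    · simp only [pivotLab, if_pos h]
      cases lab x <;> simp
    · simp [pivotLab, h]
  have hflow' : IsPauliFlow (pivotG G u v) I O (pivotLab lab u v)
      (pivotCorr G c u v) prec := by
    refine ⟨?_, hflow.irrefl, hflow.trans, ?_, ?_, ?_, ?_, ?_, ?_, ?_, ?_, ?_⟩
    · -- corr_sub
      intro w hw x hx
      by_cases h1 : x = u
      · replace h1 : u = x := h1.symm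
        subst h1; exact huI
      · by_cases h2 : x = v
        · replace h2 : v = x := h2.symm
          subst h2; exact hvI
        · exact hflow.corr_sub w hw ((hB'x w x h1 h2).mp hx)
    · -- p1
      intro w hw x hx hxO hwx hl
      by_cases h1 : x = u
      · replace h1 : u = x := h1.symm
        subst h1
        refine hflow.p2 w hw u ((hB'u w).mp hx) huO hwx ?_
        cases h2 : lab u <;> simp_all [pivotLab]
      · by_cases h2 : x = v
        · replace h2 : v = x := h2.symm
          subst h2
          refine hflow.p2 w hw v ((hB'v w).mp hx) hvO hwx ?_
          cases h3 : lab v <;> simp_all [pivotLab]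
        · refine hflow.p1 w hw x ((hB'x w x h1 h2).mp hx) hxO hwx ?_
          rw [hlab_other x h1 h2] at hl
          exact hl
    · -- p2
      intro w hw x hx hxO hwx hl
      by_cases h1 : x = u
      · replace h1 : u = x := h1.symm
        subst h1
        refine hflow.p1 w hw u ((hOdd'u w).mp hx) huO hwx ?_
        cases h2 : lab u <;> simp_all [pivotLab]
      · by_cases h2 : x = v
        · replace h2 : v = x := h2.symm
          subst h2
          refine hflow.p1 w hw v ((hOdd'v w).mp hx) hvO hwx ?_
          cases h3 : lab v <;> simp_all [pivotLab]
        · refine hflow.p2 w hw x ((hOdd'x w x h1 h2).mp hx) hxO hwx ?_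
          rw [hlab_other x h1 h2] at hl
          exact hl
    · -- p3
      intro w hw x hxO hnp hwx hl
      rw [hlabY x] at hl
      rw [hcOddAll w]
      exact hflow.p3 w hw x hxO hnp hwx hl
    · -- p4 : lab' x = XY
      intro x hw hl
      by_cases h1 : x = u
      · replace h1 : u = x := h1.symm
        subst h1
        have h2 : lab u = MLabel.YZ := by cases h3 : lab u <;> simp_all [pivotLab]
        obtain ⟨h6a, h6b⟩ := hflow.p6 u huO h2
        exact ⟨fun hmem => h6b ((hB'u u).mp hmem), (hOdd'u u).mpr h6a⟩
      · by_cases h2 : x = v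
        · replace h2 : v = x := h2.symm
          subst h2
          have h3 : lab v = MLabel.YZ := by cases h4 : lab v <;> simp_all [pivotLab]
          obtain ⟨h6a, h6b⟩ := hflow.p6 v hvO h3
          exact ⟨fun hmem => h6b ((hB'v v).mp hmem), (hOdd'v v).mpr h6a⟩
        · rw [hlab_other x h1 h2] at hl
          obtain ⟨ha, hb⟩ := hflow.p4 x hw hl
          exact ⟨fun hmem => ha ((hB'x x x h1 h2).mp hmem), (hOdd'x x x h1 h2).mpr hb⟩
    · -- p5 : lab' x = XZ
      intro x hw hl
      by_cases h1 : x = u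
      · replace h1 : u = x := h1.symm
        subst h1
        have h2 : lab u = MLabel.XZ := by cases h3 : lab u <;> simp_all [pivotLab]
        obtain ⟨h5a, h5b⟩ := hflow.p5 u huO h2
        exact ⟨(hB'u u).mpr h5b, (hOdd'u u).mpr h5a⟩
      · by_cases h2 : x = v
        · replace h2 : v = x := h2.symm
          subst h2
          have h3 : lab v = MLabel.XZ := by cases h4 : lab v <;> simp_all [pivotLab]
          obtain ⟨h5a, h5b⟩ := hflow.p5 v hvO h3
          exact ⟨(hB'v v).mpr h5b, (hOdd'v v).mpr h5a⟩
        · rw [hlab_other x h1 h2] at hl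
          obtain ⟨ha, hb⟩ := hflow.p5 x hw hl
          exact ⟨(hB'x x x h1 h2).mpr ha, (hOdd'x x x h1 h2).mpr hb⟩
    · -- p6 : lab' x = YZ
      intro x hw hl
      by_cases h1 : x = u
      · replace h1 : u = x := h1.symm
        subst h1
        have h2 : lab u = MLabel.XY := by cases h3 : lab u <;> simp_all [pivotLab]
        obtain ⟨h4a, h4b⟩ := hflow.p4 u huO h2
        exact ⟨(hB'u u).mpr h4b, fun hmem => h4a ((hOdd'u u).mp hmem)⟩
      · by_cases h2 : x = v
        · replace h2 : v = x := h2.symm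
          subst h2
          have h3 : lab v = MLabel.XY := by cases h4 : lab v <;> simp_all [pivotLab]
          obtain ⟨h4a, h4b⟩ := hflow.p4 v hvO h3
          exact ⟨(hB'v v).mpr h4b, fun hmem => h4a ((hOdd'v v).mp hmem)⟩
        · rw [hlab_other x h1 h2] at hl
          obtain ⟨ha, hb⟩ := hflow.p6 x hw hl
          exact ⟨(hB'x x x h1 h2).mpr ha, fun hmem => hb ((hOdd'x x x h1 h2).mp hmem)⟩
    · -- p7 : lab' x = X
      intro x hw hl
      by_cases h1 : x = u
      · replace h1 : u = x := h1.symm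
        subst h1
        have h2 : lab u = MLabel.Z := by cases h3 : lab u <;> simp_all [pivotLab]
        exact (hOdd'u u).mpr (hflow.p8 u huO h2)
      · by_cases h2 : x = v
        · replace h2 : v = x := h2.symm
          subst h2
          have h3 : lab v = MLabel.Z := by cases h4 : lab v <;> simp_all [pivotLab]
          exact (hOdd'v v).mpr (hflow.p8 v hvO h3)
        · rw [hlab_other x h1 h2] at hl
          exact (hOdd'x x x h1 h2).mpr (hflow.p7 x hw hl)
    · -- p8 : lab' x = Z
      intro x hw hl
      by_cases h1 : x = u
      · replace h1 : u = x := h1.symm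
        subst h1
        have h2 : lab u = MLabel.X := by cases h3 : lab u <;> simp_all [pivotLab]
        exact (hB'u u).mpr (hflow.p7 u huO h2)
      · by_cases h2 : x = v
        · replace h2 : v = x := h2.symm
          subst h2
          have h3 : lab v = MLabel.X := by cases h4 : lab v <;> simp_all [pivotLab]
          exact (hB'v v).mpr (hflow.p7 v hvO h3)
        · rw [hlab_other x h1 h2] at hl
          exact (hB'x x x h1 h2).mpr (hflow.p8 x hw hl)
    · -- p9 : lab' x = Y
      intro x hw hl
      rw [hlabY x] at hl
      rw [hcOddAll x]
      exact hflow.p9 x hw hl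
  refine ⟨hflow', fun w _ => hcOddAll w, ?_, ?_⟩
  · rintro ⟨_, hfoc⟩ hXZu hXZv
    refine ⟨hflow', fun w hw => ?_⟩
    obtain ⟨f1, f2, f3⟩ := hfoc w hw
    refine ⟨?_, ?_, ?_⟩
    · rintro x ⟨hxS, hxB⟩
      by_cases h1 : x = u
      · replace h1 : u = x := h1.symm
        subst h1
        have h4 : u ∈ oddN G (c w) := (hB'u w).mp hxB
        have h5 := f2 u ⟨hxS, h4⟩
        cases h6 : lab u <;> simp_all [pivotLab]
      · by_cases h2 : x = v
        · replace h2 : v = x := h2.symm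
          subst h2
          have h4 : v ∈ oddN G (c w) := (hB'v w).mp hxB
          have h5 := f2 v ⟨hxS, h4⟩
          cases h6 : lab v <;> simp_all [pivotLab]
        · rw [hlab_other x h1 h2]
          exact f1 x ⟨hxS, (hB'x w x h1 h2).mp hxB⟩
    · rintro x ⟨hxS, hxO⟩
      by_cases h1 : x = u
      · replace h1 : u = x := h1.symm
        subst h1
        have h4 : u ∈ c w := (hOdd'u w).mp hxO
        have h5 := f1 u ⟨hxS, h4⟩
        cases h6 : lab u <;> simp_all [pivotLab]
      · by_cases h2 : x = v
        · replace h2 : v = x := h2.symm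
          subst h2
          have h4 : v ∈ c w := (hOdd'v w).mp hxO
          have h5 := f1 v ⟨hxS, h4⟩
          cases h6 : lab v <;> simp_all [pivotLab]
        · rw [hlab_other x h1 h2]
          exact f2 x ⟨hxS, (hOdd'x w x h1 h2).mp hxO⟩
    · intro x hxS hl
      rw [hlabY x] at hl
      rw [hcOddAll w]
      exact f3 x hxS hl
  · intro hpl w hw
    by_cases h : w = u ∨ w = v
    · have h2 := hpl w hw
      simp only [pivotLab, if_pos h]
      cases h3 : lab w <;> simp_all
    · rw [hlab_other w (fun hh => h (Or.inl hh)) (fun hh => h (Or.inr hh))]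
      exact hpl w hw

end
end
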